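/- arXiv:1502.01368 — 6 statements merged into one kernel-verified Lean document; each statement's English description precedes it below -/
import Mathlib

section
/- Let K ≥ 2 be an integer, y ∈ {1,…,K}, and let v_1,…,v_K and ε be vectors in a real inner product space with ⟨ε, v_k⟩ = 0 for every k = 1,…,K, and set x = Σ_{k=1}^K v_k + ε. If class y dominates the representation, i.e. ‖Σ_{k≠y} v_k‖ < ‖v_y‖, and class y positively dominates the representation, i.e. ‖v_y‖ ≤ ‖Σ_{j≠k} v_j‖ for every k ≠ y, then ‖x − v_y‖ < ‖x − v_k‖ for every k ≠ y; in particular y is the unique minimizer of k ↦ ‖x − v_k‖, so the sparse representation classifier assigns x its correct label y. -/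
/-!
Since `x - v k = ∑_{j ≠ k} v j + ε` and `ε` is orthogonal to every partial sum of the `v j`,
Pythagoras turns the comparison of `‖x - v y‖` and `‖x - v k‖` into that of
`‖∑_{j ≠ y} v j‖` and `‖∑_{j ≠ k} v j‖`, and the two dominance conditions chain into
`‖∑_{j ≠ y} v j‖ < ‖v y‖ ≤ ‖∑_{j ≠ k} v j‖`.
-/

open Finset RealInnerProductSpace

theorem sum_add_sub_eq_sum_erase_add {ι G : Type*} [Fintype ι] [DecidableEq ι] [AddCommGroup G]
    (v : ι → G) (ε : G) (k : ι) :
    ∑ j, v j + ε - v k = ∑ j ∈ univ.erase k, v j + ε := by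
  rw [sum_erase_eq_sub (mem_univ k)]
  abel

section
variable {E : Type*} [NormedAddCommGroup E] [InnerProductSpace ℝ E]

theorem norm_add_lt_norm_add_of_inner_eq_zero {u w ε : E} (hu : ⟪u, ε⟫ = 0) (hw : ⟪w, ε⟫ = 0)
    (h : ‖u‖ < ‖w‖) : ‖u + ε‖ < ‖w + ε‖ := by
  have hsq : ‖u + ε‖ * ‖u + ε‖ < ‖w + ε‖ * ‖w + ε‖ := by
    rw [norm_add_sq_eq_norm_sq_add_norm_sq_real hu, norm_add_sq_eq_norm_sq_add_norm_sq_real hw]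
    gcongr
  exact lt_of_mul_self_lt_mul_self₀ (norm_nonneg _) hsq

theorem inner_sum_eq_zero_of_forall_inner_eq_zero {ι : Type*} (s : Finset ι) {v : ι → E} {ε : E}
    (h : ∀ k, ⟪ε, v k⟫ = 0) : ⟪∑ j ∈ s, v j, ε⟫ = 0 := by
  simp [sum_inner, real_inner_comm, h]

end

theorem src_dominance_implies_correct_classification_general
    {E : Type*} [NormedAddCommGroup E] [InnerProductSpace ℝ E]
    (K : ℕ) (y : Fin K) (v : Fin K → E) (ε : E)
    (horth : ∀ k, ⟪ε, v k⟫ = 0)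
    (x : E) (hx : x = ∑ k, v k + ε)
    (hdom : ‖∑ k ∈ univ.erase y, v k‖ < ‖v y‖)
    (hposdom : ∀ k, k ≠ y → ‖v y‖ ≤ ‖∑ j ∈ univ.erase k, v j‖) :
    ∀ k, k ≠ y → ‖x - v y‖ < ‖x - v k‖ := by
  intro k hk
  rw [hx, sum_add_sub_eq_sum_erase_add, sum_add_sub_eq_sum_erase_add]
  exact norm_add_lt_norm_add_of_inner_eq_zero
    (inner_sum_eq_zero_of_forall_inner_eq_zero _ horth)
    (inner_sum_eq_zero_of_forall_inner_eq_zero _ horth)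
    (hdom.trans_le (hposdom k hk))

/-- class dominance plus positive class dominance imply correct
classification by the sparse representation classifier. -/
theorem src_dominance_implies_correct_classification
    {E : Type*} [NormedAddCommGroup E] [InnerProductSpace ℝ E]
    (K : ℕ) (hK : 2 ≤ K) (y : Fin K) (v : Fin K → E) (ε : E)
    (horth : ∀ k, ⟪ε, v k⟫ = 0)
    (x : E) (hx : x = ∑ k, v k + ε)
    (hdom : ‖∑ k ∈ univ.erase y, v k‖ < ‖v y‖)
    (hposdom : ∀ k, k ≠ y → ‖v y‖ ≤ ‖∑ j ∈ univ.erase k, v j‖) :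
    ∀ k, k ≠ y → ‖x - v y‖ < ‖x - v k‖ :=
  src_dominance_implies_correct_classification_general K y v ε horth x hx hdom hposdom
end

section
/- Let v_1, v_2 and ε be vectors in a real inner product space with ⟨ε, v_1⟩ = 0 and ⟨ε, v_2⟩ = 0, and set x = v_1 + v_2 + ε. If ‖v_2‖ < ‖v_1‖ (class 1 dominates the representation), then ‖x − v_1‖ < ‖x − v_2‖; hence in the two-class case, class dominance alone guarantees that the sparse representation classifier assigns x the correct label. -/
open RealInnerProductSpace

theorem norm_add_lt_norm_add_iff_of_inner_eq_zero {F : Type*} [NormedAddCommGroup F]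
    [InnerProductSpace ℝ F] {a b w : F} (ha : ⟪a, w⟫ = 0) (hb : ⟪b, w⟫ = 0) :
    ‖a + w‖ < ‖b + w‖ ↔ ‖a‖ < ‖b‖ := by
  rw [mul_self_lt_mul_self_iff (norm_nonneg _) (norm_nonneg _),
    mul_self_lt_mul_self_iff (norm_nonneg _) (norm_nonneg _),
    norm_add_sq_eq_norm_sq_add_norm_sq_real ha, norm_add_sq_eq_norm_sq_add_norm_sq_real hb,
    add_lt_add_iff_right]

/-- in the two-class case, class dominance alone guarantees
correct classification by SRC. -/
theorem src_two_class_dominance_sufficient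
    {E : Type*} [NormedAddCommGroup E] [InnerProductSpace ℝ E]
    (v₁ v₂ ε : E) (h₁ : ⟪ε, v₁⟫ = 0) (h₂ : ⟪ε, v₂⟫ = 0)
    (x : E) (hx : x = v₁ + v₂ + ε)
    (hdom : ‖v₂‖ < ‖v₁‖) :
    ‖x - v₁‖ < ‖x - v₂‖ := by
  have hx₁ : x - v₁ = v₂ + ε := by rw [hx]; abel
  have hx₂ : x - v₂ = v₁ + ε := by rw [hx]; abel
  rw [hx₁, hx₂]
  exact (norm_add_lt_norm_add_iff_of_inner_eq_zero
    (real_inner_comm v₂ ε ▸ h₂) (real_inner_comm v₁ ε ▸ h₁)).2 hdom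
end

section
/- Let K ≥ 2, y ∈ {1,…,K}, and let v_1,…,v_K be vectors of the Euclidean space ℝ^m each of which has all coordinates nonnegative, and let ε ∈ ℝ^m satisfy ⟨ε, v_k⟩ = 0 for every k; set x = Σ_{k=1}^K v_k + ε. If class y dominates the representation, i.e. ‖Σ_{k≠y} v_k‖ < ‖v_y‖, then class y also positively dominates it, i.e. ‖v_y‖ ≤ ‖Σ_{j≠k} v_j‖ for every k ≠ y, and consequently ‖x − v_y‖ < ‖x − v_k‖ for every k ≠ y, so the sparse representation classifier assigns x its correct label y. -/
/-!
Nonnegative vectors have nonnegative inner products, so adding one to `v y` cannot shorten it: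
`‖v y‖ ≤ ‖∑_{j ≠ k} v j‖` whenever `y ≠ k`. Since `x - v k = ∑_{j ≠ k} v j + ε` with `ε`
orthogonal to that sum, Pythagoras turns class dominance into `‖x - v y‖ < ‖x - v k‖`.
-/

open Finset RealInnerProductSpace

lemma EuclideanSpace.inner_nonneg_of_nonneg {ι : Type*} [Fintype ι] {a b : EuclideanSpace ℝ ι}
    (ha : ∀ i, 0 ≤ a i) (hb : ∀ i, 0 ≤ b i) : 0 ≤ ⟪a, b⟫ := by
  rw [PiLp.inner_apply]
  exact sum_nonneg fun i _ => mul_nonneg (hb i) (ha i)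

section InnerProductSpace

variable {E : Type*} [NormedAddCommGroup E] [InnerProductSpace ℝ E]

lemma norm_le_norm_add_of_inner_nonneg {a b : E} (h : 0 ≤ ⟪a, b⟫) : ‖a‖ ≤ ‖a + b‖ := by
  have hsq : ‖a‖ ^ 2 ≤ ‖a + b‖ ^ 2 := by
    rw [norm_add_sq_real]
    nlinarith [sq_nonneg ‖b‖]
  exact (pow_le_pow_iff_left₀ (norm_nonneg _) (norm_nonneg _) two_ne_zero).1 hsq

lemma norm_le_norm_sum_of_inner_nonneg {ι : Type*} [DecidableEq ι] {s : Finset ι} {v : ι → E}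
    {y : ι} (hy : y ∈ s) (h : ∀ j ∈ s.erase y, 0 ≤ ⟪v y, v j⟫) : ‖v y‖ ≤ ‖∑ j ∈ s, v j‖ := by
  rw [← add_sum_erase s v hy]
  exact norm_le_norm_add_of_inner_nonneg (by rw [inner_sum]; exact sum_nonneg h)

lemma norm_add_lt_norm_add_of_inner_eq_zero_s3 {a b ε : E} (ha : ⟪ε, a⟫ = 0) (hb : ⟪ε, b⟫ = 0)
    (hab : ‖a‖ < ‖b‖) : ‖a + ε‖ < ‖b + ε‖ := by
  have hsq : ‖a + ε‖ ^ 2 < ‖b + ε‖ ^ 2 := by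
    rw [norm_add_sq_real, norm_add_sq_real, real_inner_comm, ha, real_inner_comm, hb]
    nlinarith [norm_nonneg a]
  exact (pow_lt_pow_iff_left₀ (norm_nonneg _) (norm_nonneg _) two_ne_zero).1 hsq

end InnerProductSpace

theorem src_nonneg_dominance_implies_correct_general
    (m K : ℕ) (y : Fin K)
    (v : Fin K → EuclideanSpace ℝ (Fin m))
    (hnn : ∀ k, ∀ i, 0 ≤ v k i)
    (ε : EuclideanSpace ℝ (Fin m)) (horth : ∀ k, ⟪ε, v k⟫ = 0)
    (x : EuclideanSpace ℝ (Fin m)) (hx : x = ∑ k, v k + ε)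
    (hdom : ‖∑ k ∈ univ.erase y, v k‖ < ‖v y‖) :
    (∀ k, k ≠ y → ‖v y‖ ≤ ‖∑ j ∈ univ.erase k, v j‖) ∧
      ∀ k, k ≠ y → ‖x - v y‖ < ‖x - v k‖ := by
  have hpos : ∀ k, k ≠ y → ‖v y‖ ≤ ‖∑ j ∈ univ.erase k, v j‖ := fun k hk =>
    norm_le_norm_sum_of_inner_nonneg (mem_erase.2 ⟨hk.symm, mem_univ y⟩)
      fun j _ => EuclideanSpace.inner_nonneg_of_nonneg (hnn y) (hnn j)
  have hresidual : ∀ k, x - v k = ∑ j ∈ univ.erase k, v j + ε := fun k => by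
    rw [hx, ← add_sum_erase _ v (mem_univ k)]
    abel
  have horth_sum : ∀ k, ⟪ε, ∑ j ∈ univ.erase k, v j⟫ = 0 := fun k => by
    rw [inner_sum]
    exact sum_eq_zero fun j _ => horth j
  refine ⟨hpos, fun k hk => ?_⟩
  rw [hresidual y, hresidual k]
  exact norm_add_lt_norm_add_of_inner_eq_zero_s3 (horth_sum y) (horth_sum k)
    (hdom.trans_le (hpos k hk))

/-- for entrywise nonnegative class components, class dominance
implies positive class dominance and hence correct classification by SRC. -/
theorem src_nonneg_dominance_implies_correct
    (m K : ℕ) (hK : 2 ≤ K) (y : Fin K)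
    (v : Fin K → EuclideanSpace ℝ (Fin m))
    (hnn : ∀ k, ∀ i, 0 ≤ v k i)
    (ε : EuclideanSpace ℝ (Fin m)) (horth : ∀ k, ⟪ε, v k⟫ = 0)
    (x : EuclideanSpace ℝ (Fin m)) (hx : x = ∑ k, v k + ε)
    (hdom : ‖∑ k ∈ univ.erase y, v k‖ < ‖v y‖) :
    (∀ k, k ≠ y → ‖v y‖ ≤ ‖∑ j ∈ univ.erase k, v j‖) ∧
      ∀ k, k ≠ y → ‖x - v y‖ < ‖x - v k‖ :=
  src_nonneg_dominance_implies_correct_general m K y v hnn ε horth x hx hdom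
end

section
/- Let x, u, w and ε be vectors in a real inner product space with x = u + w + ε, ⟨ε, u⟩ = 0, ⟨ε, w⟩ = 0, u ≠ 0, w ≠ 0, and u and w linearly independent (equivalently |⟨u, w⟩| < ‖u‖·‖w‖). Then |⟨x, u⟩|/‖u‖ > |⟨x, w⟩|/‖w‖ if and only if ‖w‖ < ‖u‖. Equivalently, the principal angle θ(x, u) is strictly smaller than θ(x, w) if and only if class dominance ‖w‖ < ‖u‖ holds. -/
open RealInnerProductSpace

/-- the principal angle of x with u is strictly smaller than the
principal angle of x with w if and only if class dominance ‖w‖ < ‖u‖ holds. -/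
theorem src_principal_angle_iff_class_dominance
    {E : Type*} [NormedAddCommGroup E] [InnerProductSpace ℝ E]
    (x u w ε : E) (hx : x = u + w + ε)
    (hεu : ⟪ε, u⟫ = 0) (hεw : ⟪ε, w⟫ = 0)
    (hu : u ≠ 0) (hw : w ≠ 0)
    (hindep : |⟪u, w⟫| < ‖u‖ * ‖w‖) :
    |⟪x, u⟫| / ‖u‖ > |⟪x, w⟫| / ‖w‖ ↔ ‖w‖ < ‖u‖ := by
  have ha : (0:ℝ) < ‖u‖ := norm_pos_iff.mpr hu
  have hb : (0:ℝ) < ‖w‖ := norm_pos_iff.mpr hw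
  set a := ‖u‖ with hadef
  set b := ‖w‖ with hbdef
  set c := ⟪u, w⟫ with hcdef
  have hxu : ⟪x, u⟫ = a^2 + c := by
    rw [hx, inner_add_left, inner_add_left, hεu, real_inner_self_eq_norm_sq,
      real_inner_comm u w]
    ring
  have hxw : ⟪x, w⟫ = c + b^2 := by
    rw [hx, inner_add_left, inner_add_left, hεw, real_inner_self_eq_norm_sq]
    ring
  rw [hxu, hxw, gt_iff_lt, div_lt_div_iff₀ hb ha]
  have hc1 : -(a*b) < c := neg_lt_of_abs_lt hindep
  have hc2 : c < a*b := lt_of_abs_lt hindep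
  constructor
  · intro h
    by_contra hab
    push_neg at hab
    -- a ≤ b, show |a²+c|*b ≤ |c+b²|*a, contradicting h
    have hsq : (|a ^ 2 + c| * b) ^ 2 ≤ (|c + b ^ 2| * a) ^ 2 := by
      rw [mul_pow, mul_pow, sq_abs, sq_abs]
      nlinarith [mul_nonneg (mul_nonneg (sub_nonneg.mpr hab) (sub_pos.mpr hc2).le)
        (mul_nonneg (by positivity : (0:ℝ) ≤ a + b) (by linarith : (0:ℝ) ≤ a*b + c))]
    have := le_of_pow_le_pow_left₀ (by norm_num) (by positivity) hsq
    linarith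
  · intro h
    have hsq : (|c + b ^ 2| * a) ^ 2 < (|a ^ 2 + c| * b) ^ 2 := by
      rw [mul_pow, mul_pow, sq_abs, sq_abs]
      nlinarith [mul_pos (mul_pos (sub_pos.mpr h) (sub_pos.mpr hc2))
        (mul_pos (by positivity : (0:ℝ) < a + b) (by linarith : (0:ℝ) < a*b + c))]
    exact lt_of_pow_lt_pow_left₀ 2 (by positivity) hsq
end

section
/- Let x, u, w and ε be vectors in a real inner product space with x = u + w + ε, ⟨ε, u⟩ = 0, ⟨ε, w⟩ = 0, u ≠ 0, w ≠ 0, and u and w linearly independent (equivalently |⟨u, w⟩| < ‖u‖·‖w‖). If |⟨x, u⟩|/‖u‖ > |⟨x, w⟩|/‖w‖ (i.e. the principal angle of x with u is strictly smaller than that with w), then ‖x − u‖ < ‖x − w‖; hence in the two-class setting, the principal angle condition implies correct classification by the sparse representation classifier. -/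
open RealInnerProductSpace

/-- the principal angle condition implies correct classification by
the sparse representation classifier in the two-class setting. -/
theorem src_principal_angle_implies_correct
    {E : Type*} [NormedAddCommGroup E] [InnerProductSpace ℝ E]
    (x u w ε : E) (hx : x = u + w + ε)
    (hεu : ⟪ε, u⟫ = 0) (hεw : ⟪ε, w⟫ = 0)
    (hu : u ≠ 0) (hw : w ≠ 0)
    (hindep : |⟪u, w⟫| < ‖u‖ * ‖w‖)
    (hangle : |⟪x, u⟫| / ‖u‖ > |⟪x, w⟫| / ‖w‖) :
    ‖x - u‖ < ‖x - w‖ := by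
  have hu' : (0:ℝ) < ‖u‖ := norm_pos_iff.mpr hu
  have hw' : (0:ℝ) < ‖w‖ := norm_pos_iff.mpr hw
  have hxu : ⟪x, u⟫ = ‖u‖^2 + ⟪u, w⟫ := by
    rw [hx]
    simp [inner_add_left, real_inner_self_eq_norm_sq, real_inner_comm w u, hεu]
  have hxw : ⟪x, w⟫ = ⟪u, w⟫ + ‖w‖^2 := by
    rw [hx]
    simp [inner_add_left, real_inner_self_eq_norm_sq, hεw]
  have hangle' : |⟪x, w⟫| * ‖u‖ < |⟪x, u⟫| * ‖w‖ := by
    rwa [gt_iff_lt, div_lt_div_iff₀ hw' hu'] at hangle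
  have hc1 : -(‖u‖ * ‖w‖) < ⟪u, w⟫ := neg_lt_of_abs_lt hindep
  have hc2 : ⟪u, w⟫ < ‖u‖ * ‖w‖ := lt_of_abs_lt hindep
  rw [hxu, hxw] at hangle'
  have hwu : ‖w‖ < ‖u‖ := by
    by_contra h
    push_neg at h
    have hb : 0 < ⟪u, w⟫ + ‖w‖^2 := by nlinarith
    rw [abs_of_pos hb] at hangle'
    rcases abs_cases (‖u‖^2 + ⟪u, w⟫) with ⟨he, _⟩ | ⟨he, _⟩ <;> rw [he] at hangle' <;>
      nlinarith
  have h1 : ‖x - u‖^2 = ‖w‖^2 + ‖ε‖^2 := by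
    have hxe : x - u = w + ε := by rw [hx]; abel
    rw [hxe, norm_add_sq_real, real_inner_comm, hεw]; ring
  have h2 : ‖x - w‖^2 = ‖u‖^2 + ‖ε‖^2 := by
    have hxe : x - w = u + ε := by rw [hx]; abel
    rw [hxe, norm_add_sq_real, real_inner_comm, hεu]; ring
  nlinarith [norm_nonneg (x - u), norm_nonneg (x - w), h1, h2]
end

section
/- Let x and z be nonzero vectors in a finite-dimensional real inner product space, let V be a subspace, and let t ∈ (0, 1] be such that ‖P_V x‖ < t·‖x‖ (where P_V is the orthogonal projection onto V) and |⟨x, z⟩| ≥ t·‖x‖·‖z‖. Then z ∉ V, and the orthogonal projection residual of x strictly decreases when z is adjoined to V: the distance from x to the subspace V + span{z} is strictly smaller than the distance from x to V. -/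
open RealInnerProductSpace

/-!
The residual `r = x - P_V x` is orthogonal to `V`, and `⟪x, z⟫ = ⟪P_V x, z⟫ + ⟪r, z⟫` with
`|⟪P_V x, z⟫| ≤ ‖P_V x‖ ‖z‖ < |⟪x, z⟫|`, so `⟪r, z⟫ ≠ 0`. Hence `z ∉ V`, and moving `P_V x` along
`z` by `⟪r, z⟫ / ‖z‖²` gives a point of `V + ℝ z` at squared distance `‖r‖² - ⟪r, z⟫² / ‖z‖²`
from `x`.
-/

section

variable {E : Type*} [NormedAddCommGroup E] [InnerProductSpace ℝ E]

theorem Submodule.infDist_eq_norm_sub_starProjection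
    (K : Submodule ℝ E) [K.HasOrthogonalProjection] (x : E) :
    Metric.infDist x K = ‖x - K.starProjection x‖ := by
  rw [Metric.infDist_eq_iInf, K.starProjection_minimal]
  simp only [dist_eq_norm]
  rfl

theorem norm_sub_smul_lt_of_inner_ne_zero {r z : E} (h : ⟪r, z⟫ ≠ 0) :
    ‖r - (⟪r, z⟫ / ‖z‖ ^ 2) • z‖ < ‖r‖ := by
  have hz : ‖z‖ ≠ 0 := norm_ne_zero_iff.mpr (by rintro rfl; simp at h)
  have hsq : ‖r - (⟪r, z⟫ / ‖z‖ ^ 2) • z‖ ^ 2 = ‖r‖ ^ 2 - ⟪r, z⟫ ^ 2 / ‖z‖ ^ 2 := by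
    rw [norm_sub_sq_real, real_inner_smul_right, norm_smul, mul_pow, Real.norm_eq_abs, sq_abs]
    field_simp
    ring
  refine (pow_lt_pow_iff_left₀ (norm_nonneg _) (norm_nonneg _) two_ne_zero).mp ?_
  rw [hsq]
  have : 0 < ⟪r, z⟫ ^ 2 / ‖z‖ ^ 2 := by positivity
  linarith

theorem Submodule.infDist_sup_span_singleton_lt
    (K : Submodule ℝ E) [K.HasOrthogonalProjection] {x z : E}
    (h : ⟪x - K.starProjection x, z⟫ ≠ 0) :
    Metric.infDist x ↑(K ⊔ ℝ ∙ z) < Metric.infDist x K := by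
  set c := ⟪x - K.starProjection x, z⟫ / ‖z‖ ^ 2
  have hmem : K.starProjection x + c • z ∈ K ⊔ ℝ ∙ z :=
    add_mem_sup (K.starProjection_apply_mem x) (smul_mem _ c (mem_span_singleton_self z))
  calc Metric.infDist x ↑(K ⊔ ℝ ∙ z)
      ≤ dist x (K.starProjection x + c • z) := Metric.infDist_le_dist_of_mem hmem
    _ = ‖x - K.starProjection x - c • z‖ := by rw [dist_eq_norm, sub_add_eq_sub_sub]
    _ < ‖x - K.starProjection x‖ := norm_sub_smul_lt_of_inner_ne_zero h
    _ = Metric.infDist x K := (K.infDist_eq_norm_sub_starProjection x).symm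

theorem Submodule.inner_sub_starProjection_ne_zero
    (K : Submodule ℝ E) [K.HasOrthogonalProjection] {x z : E}
    (h : ‖K.starProjection x‖ * ‖z‖ < |⟪x, z⟫|) :
    ⟪x - K.starProjection x, z⟫ ≠ 0 := by
  intro h0
  have : ⟪x, z⟫ = ⟪K.starProjection x, z⟫ := by
    rwa [inner_sub_left, sub_eq_zero] at h0
  exact h.not_ge (this ▸ abs_real_inner_le_norm _ _)

end

theorem src_adjoin_decreases_residual_general
    {E : Type*} [NormedAddCommGroup E] [InnerProductSpace ℝ E]
    [FiniteDimensional ℝ E]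
    (x z : E) (hz : z ≠ 0) (V : Submodule ℝ E)
    (t : ℝ)
    (hproj : ‖(V.orthogonalProjection x : E)‖ < t * ‖x‖)
    (hcorr : t * ‖x‖ * ‖z‖ ≤ |⟪x, z⟫|) :
    z ∉ V ∧
      Metric.infDist x ↑(V ⊔ Submodule.span ℝ {z}) < Metric.infDist x ↑V := by
  rw [← Submodule.starProjection_apply] at hproj
  have hr : ⟪x - V.starProjection x, z⟫ ≠ 0 := V.inner_sub_starProjection_ne_zero <|
    calc ‖V.starProjection x‖ * ‖z‖ < t * ‖x‖ * ‖z‖ := by gcongr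
      _ ≤ |⟪x, z⟫| := hcorr
  exact ⟨fun hzV =>
      hr (V.inner_left_of_mem_orthogonal hzV (V.sub_starProjection_mem_orthogonal x)),
    V.infDist_sup_span_singleton_lt hr⟩

/-- if the principal angle of x with the subspace V is large
(small projection) while x is highly correlated with z, then z is not in V and
adjoining z to V strictly decreases the projection residual of x. -/
theorem src_adjoin_decreases_residual
    {E : Type*} [NormedAddCommGroup E] [InnerProductSpace ℝ E]
    [FiniteDimensional ℝ E]
    (x z : E) (hx : x ≠ 0) (hz : z ≠ 0) (V : Submodule ℝ E)
    (t : ℝ) (ht0 : 0 < t) (ht1 : t ≤ 1)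
    (hproj : ‖(V.orthogonalProjection x : E)‖ < t * ‖x‖)
    (hcorr : t * ‖x‖ * ‖z‖ ≤ |⟪x, z⟫|) :
    z ∉ V ∧
      Metric.infDist x ↑(V ⊔ Submodule.span ℝ {z}) < Metric.infDist x ↑V :=
  src_adjoin_decreases_residual_general x z hz V t hproj hcorr
end
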